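/- The rule set R = { A(x) → ∃z p(x,z) ; p(x,z) ∧ B(y) → r(z,y) } is not parallelisable: for each n, taking I_n = {A(a), B(b_1),...,B(b_n)}, the semi-oblivious chase chase_∞(I_n, R) contains a null occurring in n+1 atoms, hence no finite rule set R' admits an injective homomorphism from chase_∞(I_n,R) into chase_1(I_n,R') for all n. -/

import Mathlib

open scoped Classical
noncomputable section

namespace ER

/-- Terms: constants or variables (variables occurring in instances are called nulls). -/
inductive Term where
  | const : ℕ → Term
  | var : ℕ → Term
deriving DecidableEq

def Term.isConst : Term → Prop
  | .const _ => True
  | .var _ => False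

/-- An atom `p(t₁,…,tₙ)`. -/
structure Atom where
  pred : ℕ
  args : List Term
deriving DecidableEq

def Atom.terms (a : Atom) : Set Term := {t | t ∈ a.args}
def Atom.vars (a : Atom) : Set ℕ := {v | Term.var v ∈ a.args}

def termsOf (S : Set Atom) : Set Term := ⋃ a ∈ S, a.terms
def varsOf (S : Set Atom) : Set ℕ := ⋃ a ∈ S, a.vars
/-- The nulls (non-constant terms) occurring in a set of atoms. -/
def nullsOf (S : Set Atom) : Set Term := {t | t ∈ termsOf S ∧ ¬ t.isConst}

def Term.subst (σ : ℕ → Term) : Term → Term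
  | .const c => .const c
  | .var v => σ v

def Atom.subst (σ : ℕ → Term) (a : Atom) : Atom := ⟨a.pred, a.args.map (Term.subst σ)⟩
def substSet (σ : ℕ → Term) (S : Set Atom) : Set Atom := (Atom.subst σ) '' S

/-- A homomorphism from `S1` to `S2`: a substitution of variables by terms mapping `S1` into `S2`. -/
def isHom (σ : ℕ → Term) (S1 S2 : Set Atom) : Prop := substSet σ S1 ⊆ S2

/-- An injective homomorphism (injective on the terms of the source). -/
def isInjHom (σ : ℕ → Term) (S1 S2 : Set Atom) : Prop :=
  isHom σ S1 S2 ∧ Set.InjOn (Term.subst σ) (termsOf S1)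

/-- An instance is a finite set of ground atoms. -/
def IsInstance (I : Set Atom) : Prop := I.Finite ∧ ∀ t ∈ termsOf I, t.isConst

/-- An existential rule, given by its body and head. -/
structure Rule where
  body : Set Atom
  head : Set Atom

def Rule.frontier (R : Rule) : Set ℕ := varsOf R.body ∩ varsOf R.head
def Rule.exist (R : Rule) : Set ℕ := varsOf R.head \ varsOf R.body

/-- Well-formed rule: finite non-empty body and head, no constants. -/
def WfRule (R : Rule) : Prop :=
  R.body.Finite ∧ R.head.Finite ∧ R.body.Nonempty ∧ R.head.Nonempty ∧
  ∀ t ∈ termsOf (R.body ∪ R.head), ¬ t.isConst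

def WfList (L : List Rule) : Prop := ∀ R ∈ L, WfRule R

/-- Restriction of a substitution to a set of variables (default value elsewhere). -/
def restrict (f : ℕ → Term) (F : Set ℕ) : ℕ → Term :=
  fun v => if v ∈ F then f v else Term.const 0

/-- A semi-oblivious naming of nulls for the rules of `L`: the null created for an
existential variable depends only on the rule and the restriction of the trigger to the
frontier, and distinct such data yield distinct nulls. -/
def SONaming (L : List Rule) (ν : Rule → (ℕ → Term) → ℕ → ℕ) : Prop :=
  (∀ R ∈ L, ∀ f g : ℕ → Term,
      restrict f R.frontier = restrict g R.frontier → ν R f = ν R g) ∧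
  (∀ R ∈ L, ∀ R' ∈ L, ∀ f f' x x', ν R f x = ν R' f' x' →
      R = R' ∧ restrict f R.frontier = restrict f' R'.frontier ∧ x = x')

/-- The safe extension of a trigger `π`, replacing each existential variable by its null. -/
def safeSub (ν : Rule → (ℕ → Term) → ℕ → ℕ) (R : Rule) (π : ℕ → Term) : ℕ → Term :=
  fun y => if y ∈ R.exist then Term.var (ν R (restrict π R.frontier) y) else π y

/-- One breadth-first semi-oblivious chase step. -/
def chaseStep (ν : Rule → (ℕ → Term) → ℕ → ℕ) (L : List Rule) (S : Set Atom) : Set Atom :=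
  S ∪ {a | ∃ R ∈ L, ∃ π : ℕ → Term, isHom π R.body S ∧ a ∈ substSet (safeSub ν R π) R.head}

/-- The breadth-first semi-oblivious chase. -/
def chaseF (ν : Rule → (ℕ → Term) → ℕ → ℕ) (L : List Rule) (I : Set Atom) : ℕ → Set Atom
  | 0 => I
  | k + 1 => chaseStep ν L (chaseF ν L I k)

def chaseInf (ν : Rule → (ℕ → Term) → ℕ → ℕ) (L : List Rule) (I : Set Atom) : Set Atom :=
  ⋃ k, chaseF ν L I k

/-- `L'` parallelises `L`. -/
def Parallelises (L' L : List Rule) : Prop :=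
  ∀ ν ν', SONaming L ν → SONaming L' ν' → ∀ I, IsInstance I →
    (∃ σ, isInjHom σ (chaseInf ν L I) (chaseF ν' L' I 1)) ∧
    (∃ σ, isHom σ (chaseF ν' L' I 1) (chaseInf ν L I))

def Parallelisable (L : List Rule) : Prop := ∃ L', WfList L' ∧ Parallelises L' L

/-- Boundedness of the semi-oblivious chase, uniformly over all instances. -/
def Bounded (L : List Rule) : Prop :=
  ∃ k, ∀ ν, SONaming L ν → ∀ I, IsInstance I → chaseF ν L I k = chaseInf ν L I

def ChaseFinite (L : List Rule) : Prop :=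
  ∀ ν, SONaming L ν → ∀ I, IsInstance I → ∃ k, chaseF ν L I k = chaseInf ν L I

/-- Two atoms are `T`-linked if they share a term of `T`. -/
def linked (T : Set Term) (a b : Atom) : Prop := ∃ t ∈ T, t ∈ a.terms ∧ t ∈ b.terms

/-- Connectivity in `S` by a path of atoms where consecutive atoms share a term of `T`. -/
def connectedIn (S : Set Atom) (T : Set Term) (a b : Atom) : Prop :=
  a ∈ S ∧ b ∈ S ∧ Relation.ReflTransGen (fun x y => x ∈ S ∧ y ∈ S ∧ linked T x y) a b

/-- `P` is closed in `S` w.r.t. `T`-linkedness. -/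
def closedIn (S : Set Atom) (T : Set Term) (P : Set Atom) : Prop :=
  ∀ a ∈ S, ∀ b ∈ P, linked T a b → a ∈ P

/-- A piece of `S` w.r.t. `T`: a non-empty subset closed under `T`-linkedness and minimal such. -/
def IsPiece (S : Set Atom) (T : Set Term) (P : Set Atom) : Prop :=
  P.Nonempty ∧ P ⊆ S ∧ closedIn S T P ∧
  ∀ P', P' ⊆ P → P'.Nonempty → closedIn S T P' → P' = P

/-- A single-piece rule: its head is a piece of itself w.r.t. its existential variables. -/
def SinglePiece (R : Rule) : Prop := IsPiece R.head (Term.var '' R.exist) R.head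

/-- The rule used at step `k` of a derivation. -/
def ruleAt (L : List Rule) (r : ℕ → ℕ) (k : ℕ) : Rule := L.getD (r k) ⟨∅, ∅⟩

/-- The set of atoms produced by the `k`-th rule application of a derivation. -/
def producedAt (ν : Rule → (ℕ → Term) → ℕ → ℕ) (L : List Rule) (r : ℕ → ℕ)
    (π : ℕ → ℕ → Term) (k : ℕ) : Set Atom :=
  substSet (safeSub ν (ruleAt L r k) (π k)) (ruleAt L r k).head

def derivState (ν : Rule → (ℕ → Term) → ℕ → ℕ) (L : List Rule) (I : Set Atom)
    (r : ℕ → ℕ) (π : ℕ → ℕ → Term) : ℕ → Set Atom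
  | 0 => I
  | k + 1 => derivState ν L I r π k ∪ producedAt ν L r π k

/-- An `R`-derivation of length `n` from `I`: each step applies a trigger. -/
def IsDeriv (ν : Rule → (ℕ → Term) → ℕ → ℕ) (L : List Rule) (I : Set Atom) (n : ℕ)
    (r : ℕ → ℕ) (π : ℕ → ℕ → Term) : Prop :=
  ∀ k < n, r k < L.length ∧ isHom (π k) (ruleAt L r k).body (derivState ν L I r π k)

/-- A pieceful derivation: each trigger maps its rule's frontier entirely into the terms of
the initial instance, or entirely into the terms produced by a single earlier application. -/
def PiecefulDeriv (ν : Rule → (ℕ → Term) → ℕ → ℕ) (L : List Rule) (I : Set Atom) (n : ℕ)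
    (r : ℕ → ℕ) (π : ℕ → ℕ → Term) : Prop :=
  ∀ k < n, (∀ x ∈ (ruleAt L r k).frontier, π k x ∈ termsOf I) ∨
    ∃ j < k, ∀ x ∈ (ruleAt L r k).frontier, π k x ∈ termsOf (producedAt ν L r π j)

/-- A pieceful rule set: every derivation from every instance is pieceful. -/
def PiecefulSet (L : List Rule) : Prop :=
  ∀ ν, SONaming L ν → ∀ I, IsInstance I → ∀ n r π,
    IsDeriv ν L I n r π → PiecefulDeriv ν L I n r π

/-- First-order structures for the semantics of rules. -/
structure Struct where
  D : Type
  nonempty : Nonempty D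
  interp : ℕ → List D → Prop
  cinterp : ℕ → D

def evalT (M : Struct) (v : ℕ → M.D) : Term → M.D
  | .const c => M.cinterp c
  | .var x => v x

def holdsA (M : Struct) (v : ℕ → M.D) (a : Atom) : Prop :=
  M.interp a.pred (a.args.map (evalT M v))

/-- Satisfaction of (the universal-existential closure of) a rule in a structure. -/
def satRule (M : Struct) (R : Rule) : Prop :=
  ∀ v : ℕ → M.D, (∀ a ∈ R.body, holdsA M v a) →
    ∃ w : ℕ → M.D, (∀ x ∈ varsOf R.body, w x = v x) ∧ ∀ a ∈ R.head, holdsA M w a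

/-- Separating variables of `S' ⊆ S`: variables occurring both in `S'` and in `S \ S'`. -/
def sepVars (S' S : Set Atom) : Set ℕ := varsOf S' ∩ varsOf (S \ S')

/-- A piece-unifier `(S', H', u)` of a set of atoms `S` with a rule `R`. -/
def IsPieceUnifier (S : Set Atom) (R : Rule) (S' H' : Set Atom) (u : ℕ → Term) : Prop :=
  Disjoint (varsOf S) (varsOf (R.body ∪ R.head)) ∧
  S'.Nonempty ∧ S' ⊆ S ∧ H' ⊆ R.head ∧
  (∀ x, x ∉ R.frontier ∪ varsOf S' → u x = Term.var x) ∧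
  (∀ x ∈ R.frontier ∪ varsOf S', ∃ y ∈ varsOf R.head, u x = Term.var y) ∧
  (∀ x ∈ R.frontier, ∃ y ∈ R.frontier, u x = Term.var y) ∧
  (∀ x ∈ sepVars S' S, ∃ y ∈ R.frontier, u x = Term.var y) ∧
  substSet u S' = substSet u H'

/-- The existential stability property of a piece-unifier of `body R2` with `R1`. -/
def StableUnifier (R2 R1 : Rule) (B2' : Set Atom) (u : ℕ → Term) : Prop :=
  (∀ x ∈ R2.frontier, u x ∉ Term.var '' R1.exist) ∨ R2.frontier ⊆ varsOf B2'

/-- The existential composition `R2 ∘_μ R1` w.r.t. a piece-unifier `μ = (B2', H1', u)`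
of `body R2` with `R1`. -/
def compose (R2 R1 : Rule) (B2' : Set Atom) (u : ℕ → Term) : Rule :=
  if ∀ x ∈ R2.frontier, u x ∉ Term.var '' R1.exist then
    ⟨substSet u R1.body ∪ substSet u (R2.body \ B2'), substSet u R2.head⟩
  else
    ⟨substSet u R1.body ∪ substSet u (R2.body \ B2'),
     substSet u R1.head ∪ substSet u R2.head⟩

/-- The closure `R*` of a rule set under existential composition. -/
inductive InClosure (𝒮 : Set Rule) : Rule → Prop
  | base {R : Rule} : R ∈ 𝒮 → InClosure 𝒮 R
  | comp {Ri Rj : Rule} {B' H' : Set Atom} {u : ℕ → Term} :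
      InClosure 𝒮 Ri → InClosure 𝒮 Rj →
      IsPieceUnifier Ri.body Rj B' H' u → InClosure 𝒮 (compose Ri Rj B' u)

def ruleSet (L : List Rule) : Set Rule := {R | R ∈ L}

/-- The stability property for a (possibly infinite) rule set. -/
def StableSet (𝒮 : Set Rule) : Prop :=
  ∀ R1 ∈ 𝒮, ∀ R2 ∈ 𝒮, ∀ B2' H1' u,
    IsPieceUnifier R2.body R1 B2' H1' u → StableUnifier R2 R1 B2' u

/-- `J` is a result of one breadth-first chase step of a (possibly infinite) rule set on `I`,
with fresh pairwise-compatible nulls (semi-oblivious naming). -/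
def OneStepResult (𝒮 : Set Rule) (I J : Set Atom) : Prop :=
  ∃ ν : Rule → (ℕ → Term) → ℕ → ℕ,
    (∀ R ∈ 𝒮, ∀ f x, Term.var (ν R f x) ∉ termsOf I) ∧
    (∀ R ∈ 𝒮, ∀ R' ∈ 𝒮, ∀ f f' x x', ν R f x = ν R' f' x' →
        R = R' ∧ restrict f R.frontier = restrict f' R'.frontier ∧ x = x') ∧
    J = I ∪ {a | ∃ R ∈ 𝒮, ∃ π : ℕ → Term, isHom π R.body I ∧
                  a ∈ substSet (safeSub ν R π) R.head}

/-- `I, R ⊨ q` for a Boolean conjunctive query `q` (a set of atoms). -/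
def Entails (L : List Rule) (I q : Set Atom) : Prop :=
  ∀ ν, SONaming L ν → ∃ k σ, isHom σ q (chaseF ν L I k)

/-- The null `t` occurs in at least `n` atoms of `S`. -/
def occursInAtLeast (S : Set Atom) (t : Term) (n : ℕ) : Prop :=
  ∃ F : Set Atom, F ⊆ {a | a ∈ S ∧ t ∈ a.terms} ∧ F.Finite ∧ n ≤ F.ncard

def FrontierGuarded (R : Rule) : Prop := ∃ a ∈ R.body, R.frontier ⊆ a.vars

def IsDatalog (R : Rule) : Prop := R.exist = ∅ ∧ ∃ a, R.head = {a}

end ER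
namespace ER
/-- `R1 : A(x) → ∃z p(x,z)` with A = pred 0, p = pred 2. -/
def R1ex : Rule := ⟨{⟨0, [Term.var 0]⟩}, {⟨2, [Term.var 0, Term.var 1]⟩}⟩
/-- `R2 : p(x,z) ∧ B(y) → r(z,y)` with B = pred 1, r = pred 3. -/
def R2ex : Rule := ⟨{⟨2, [Term.var 2, Term.var 3]⟩, ⟨1, [Term.var 4]⟩},
                   {⟨3, [Term.var 3, Term.var 4]⟩}⟩
def Lex : List Rule := [R1ex, R2ex]
/-- `I_n = {A(a), B(b₁), …, B(b_n)}`. -/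
def Iex (n : ℕ) : Set Atom :=
  {⟨0, [Term.const 0]⟩} ∪ {a | ∃ i < n, a = ⟨1, [Term.const (i + 1)]⟩}

/-! In the chase of `I_n`, rule `R1` creates one null `z` with `p(a, z)`, and `R2` then links it
to every `bᵢ`, so `z` occurs in `n + 1` atoms. In a single breadth-first step from a ground
instance, on the other hand, a null is created by exactly one trigger, and the semi-oblivious
naming confines all its occurrences to the image of that trigger's head. An injective
homomorphism from the chase into one step of `R'` must send `z` to a null (a constant `c` would be
mapped back to an atom `p(a, c)`, which the chase does not contain), and that null would occur in
`n + 1` atoms, more than the heads of `R'` allow once `n` is large. -/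

@[simp] lemma mem_termsOf {S : Set Atom} {t : Term} : t ∈ termsOf S ↔ ∃ a ∈ S, t ∈ a.args := by
  simp [termsOf, Atom.terms]

@[simp] lemma mem_varsOf {S : Set Atom} {v : ℕ} :
    v ∈ varsOf S ↔ ∃ a ∈ S, Term.var v ∈ a.args := by
  simp [varsOf, Atom.vars]

lemma restrict_restrict (f : ℕ → Term) (F : Set ℕ) : restrict (restrict f F) F = restrict f F := by
  funext v; by_cases h : v ∈ F <;> simp [restrict, h]

def Term.toSum : Term → ℕ ⊕ ℕ
  | .const c => .inl c
  | .var v => .inr v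

instance : Countable Term :=
  Function.Injective.countable (f := Term.toSum) <| by
    rintro (_ | _) (_ | _) h <;> simp_all [Term.toSum]

lemma Atom.finite_vars (a : Atom) : a.vars.Finite :=
  (List.finite_toSet a.args).preimage fun _ _ _ _ h => Term.var.inj h

lemma Rule.frontier_finite {R : Rule} (h : R.head.Finite) : R.frontier.Finite :=
  (h.biUnion fun a _ => a.finite_vars).subset Set.inter_subset_right

lemma Atom.subst_congr {σ τ : ℕ → Term} {a : Atom} (h : ∀ v, Term.var v ∈ a.args → σ v = τ v) :
    a.subst σ = a.subst τ := by
  simp only [Atom.subst, Atom.mk.injEq, true_and, List.map_inj_left]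
  rintro (c | v) hv
  · rfl
  · exact h v hv

lemma Atom.subst_injOn {σ : ℕ → Term} {S : Set Atom}
    (hσ : Set.InjOn (Term.subst σ) (termsOf S)) : Set.InjOn (Atom.subst σ) S := by
  have : Nonempty Term := ⟨.const 0⟩
  have hinv : ∀ a ∈ S,
      (a.args.map (Term.subst σ)).map (Function.invFunOn (Term.subst σ) (termsOf S)) = a.args :=
    fun a ha => by
      rw [List.map_map]
      exact (List.map_congr_left fun t ht =>
        hσ.leftInvOn_invFunOn (mem_termsOf.2 ⟨a, ha, ht⟩)).trans (List.map_id _)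
  rintro ⟨p, l⟩ ha ⟨q, l'⟩ hb hab
  simp only [Atom.subst, Atom.mk.injEq] at hab ⊢
  have hl := hinv _ ha
  have hl' := hinv _ hb
  dsimp only at hl hl'
  rw [← hl, ← hl', hab.2]
  exact ⟨hab.1, rfl⟩

lemma occursInAtLeast.of_isInjHom {σ : ℕ → Term} {S T : Set Atom} {t : Term} {n : ℕ}
    (hσ : isInjHom σ S T) (h : occursInAtLeast S t n) : occursInAtLeast T (t.subst σ) n := by
  obtain ⟨F, hF, hFfin, hn⟩ := h
  refine ⟨Atom.subst σ '' F, ?_, hFfin.image _, ?_⟩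
  · rintro _ ⟨a, ha, rfl⟩
    exact ⟨hσ.1 ⟨a, (hF ha).1, rfl⟩, List.mem_map_of_mem (hF ha).2⟩
  · rwa [((Atom.subst_injOn hσ.2).mono fun a ha => (hF ha).1).ncard_image]

lemma countable_range_restrict {F : Set ℕ} (hF : F.Finite) :
    (Set.range fun f => restrict f F).Countable := by
  have := hF.to_subtype
  refine (Set.countable_range fun (g : F → Term) v =>
    if h : v ∈ F then g ⟨v, h⟩ else Term.const 0).mono ?_
  rintro _ ⟨f, rfl⟩
  exact ⟨fun v => f v, funext fun v => by by_cases h : v ∈ F <;> simp [restrict, h]⟩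

/-- Only countably many triples (rule, trigger restricted to the frontier, variable) occur, so an
injective code of them into `ℕ` names the nulls. -/
lemma exists_soNaming {L : List Rule} (hL : ∀ R ∈ L, R.frontier.Finite) :
    ∃ ν, SONaming L ν := by
  let D : Set (Rule × (ℕ → Term) × ℕ) :=
    ⋃ R ∈ {R | R ∈ L}, (R, ·) '' ((Set.range fun f => restrict f R.frontier) ×ˢ Set.univ)
  have hD : D.Countable := (List.finite_toSet L).countable.biUnion fun R hR =>
    ((countable_range_restrict (hL R hR)).prod Set.countable_univ).image _
  have hmem : ∀ R ∈ L, ∀ f x, (R, restrict f R.frontier, x) ∈ D := fun R hR f x =>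
    Set.mem_biUnion hR ⟨_, ⟨⟨f, rfl⟩, Set.mem_univ x⟩, rfl⟩
  obtain ⟨g, hg⟩ := Set.countable_iff_exists_injOn.1 hD
  refine ⟨fun R f x => g (R, restrict f R.frontier, x), fun R _ f f' h => by simp only [h],
    fun R hR R' hR' f f' x x' h => ?_⟩
  simpa using hg (hmem R hR f x) (hmem R' hR' f' x') h

lemma chaseF_subset_chaseF_succ (ν : Rule → (ℕ → Term) → ℕ → ℕ) (L : List Rule) (I : Set Atom)
    (k : ℕ) : chaseF ν L I k ⊆ chaseF ν L I (k + 1) :=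
  Set.subset_union_left

lemma chaseF_subset_chaseInf (ν : Rule → (ℕ → Term) → ℕ → ℕ) (L : List Rule) (I : Set Atom)
    (k : ℕ) : chaseF ν L I k ⊆ chaseInf ν L I :=
  Set.subset_iUnion (chaseF ν L I) k

section ChaseStep

variable {ν : Rule → (ℕ → Term) → ℕ → ℕ} {L : List Rule} {I : Set Atom}

lemma isHom.apply_mem_termsOf {π : ℕ → Term} {S T : Set Atom} (h : isHom π S T) {v : ℕ}
    (hv : v ∈ varsOf S) : π v ∈ termsOf T := by
  obtain ⟨b, hb, hvb⟩ := mem_varsOf.1 hv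
  exact mem_termsOf.2 ⟨_, h ⟨b, hb, rfl⟩, List.mem_map_of_mem (f := Term.subst π) hvb⟩

lemma substSet_safeSub_congr {R : Rule} {π π' : ℕ → Term}
    (h : restrict π R.frontier = restrict π' R.frontier) :
    substSet (safeSub ν R π) R.head = substSet (safeSub ν R π') R.head := by
  refine Set.image_congr fun a ha => Atom.subst_congr fun v hv => ?_
  by_cases hex : v ∈ R.exist
  · simp [safeSub, hex, h]
  · have hfr : v ∈ R.frontier :=
      ⟨by_contra fun hb => hex ⟨mem_varsOf.2 ⟨a, ha, hv⟩, hb⟩, mem_varsOf.2 ⟨a, ha, hv⟩⟩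
    simpa [safeSub, hex, restrict, hfr] using congrFun h v

lemma exists_trigger_of_null_mem_chaseStep (hI : ∀ t ∈ termsOf I, t.isConst) {a : Atom}
    (ha : a ∈ chaseStep ν L I) {m : ℕ} (hm : Term.var m ∈ a.args) :
    ∃ R ∈ L, ∃ π, a ∈ substSet (safeSub ν R π) R.head ∧
      ∃ y ∈ R.exist, m = ν R (restrict π R.frontier) y := by
  rcases ha with ha | ⟨R, hR, π, hπ, h, hh, rfl⟩
  · exact (hI _ (mem_termsOf.2 ⟨a, ha, hm⟩)).elim
  refine ⟨R, hR, π, ⟨h, hh, rfl⟩, ?_⟩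
  obtain ⟨u, hu, hum⟩ := List.mem_map.1 hm
  cases u with
  | const c => cases hum
  | var y =>
    by_cases hex : y ∈ R.exist
    · simp only [Term.subst, safeSub, if_pos hex, Term.var.injEq] at hum
      exact ⟨y, hex, hum.symm⟩
    · have hy : y ∈ varsOf R.body :=
        by_contra fun hb => hex ⟨mem_varsOf.2 ⟨h, hh, hu⟩, hb⟩
      have hc := hI _ (hπ.apply_mem_termsOf hy)
      simp only [Term.subst, safeSub, if_neg hex] at hum
      rw [hum] at hc
      exact hc.elim

lemma exists_head_image_of_null_mem_chaseStep (hν : SONaming L ν)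
    (hI : ∀ t ∈ termsOf I, t.isConst) {a₀ : Atom} (ha₀ : a₀ ∈ chaseStep ν L I) {m : ℕ}
    (hm : Term.var m ∈ a₀.args) :
    ∃ R ∈ L, ∃ π, {a | a ∈ chaseStep ν L I ∧ Term.var m ∈ a.terms} ⊆
      substSet (safeSub ν R π) R.head := by
  obtain ⟨R₀, hR₀, π₀, -, y₀, -, hm₀⟩ := exists_trigger_of_null_mem_chaseStep hI ha₀ hm
  refine ⟨R₀, hR₀, π₀, fun a ⟨ha, hma⟩ => ?_⟩
  obtain ⟨R, hR, π, haR, y, -, hmR⟩ := exists_trigger_of_null_mem_chaseStep hI ha hma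
  obtain ⟨rfl, hres, -⟩ := hν.2 R hR R₀ hR₀ _ _ y y₀ (hmR.symm.trans hm₀)
  rw [restrict_restrict, restrict_restrict] at hres
  rwa [← substSet_safeSub_congr hres]

lemma le_of_occursInAtLeast_chaseStep (hL : ∀ R ∈ L, R.head.Finite) (hν : SONaming L ν)
    (hI : ∀ t ∈ termsOf I, t.isConst) {m k : ℕ}
    (h : occursInAtLeast (chaseStep ν L I) (Term.var m) k) :
    k ≤ (L.map fun R => R.head.ncard).sum := by
  obtain ⟨F, hF, -, hk⟩ := h
  obtain rfl | ⟨a₀, ha₀⟩ := F.eq_empty_or_nonempty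
  · simp_all
  obtain ⟨R, hR, π, hsub⟩ := exists_head_image_of_null_mem_chaseStep hν hI (hF ha₀).1 (hF ha₀).2
  calc k ≤ F.ncard := hk
    _ ≤ (substSet (safeSub ν R π) R.head).ncard :=
      Set.ncard_le_ncard (hF.trans hsub) ((hL R hR).image _)
    _ ≤ R.head.ncard := Set.ncard_image_le (hL R hR)
    _ ≤ (L.map fun R => R.head.ncard).sum :=
      List.single_le_sum (fun _ _ => Nat.zero_le _) _ (List.mem_map_of_mem hR)

end ChaseStep

section PrimeExample

lemma isInstance_Iex (n : ℕ) : IsInstance (Iex n) := by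
  have hfin := ((Set.finite_Iio n).image fun i => (⟨1, [Term.const (i + 1)]⟩ : Atom)).insert
    (⟨0, [Term.const 0]⟩ : Atom)
  refine ⟨hfin.subset ?_, ?_⟩
  · rintro a (rfl | ⟨i, hi, rfl⟩)
    exacts [Set.mem_insert _ _, Set.mem_insert_of_mem _ ⟨i, hi, rfl⟩]
  · simp only [mem_termsOf]
    rintro t ⟨a, (rfl | ⟨i, -, rfl⟩), ht⟩ <;> simp_all [Term.isConst]

lemma R1ex_exist : R1ex.exist = {1} := by
  ext v; simp [Rule.exist, varsOf, Atom.vars, R1ex]; omega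

variable (ν : Rule → (ℕ → Term) → ℕ → ℕ)

def zNull : Term := .var (ν R1ex (fun _ => .const 0) 1)

def pAtom : Atom := ⟨2, [.const 0, zNull ν]⟩

def rAtom (i : ℕ) : Atom := ⟨3, [zNull ν, .const (i + 1)]⟩

lemma pAtom_mem_chaseF_one (n : ℕ) : pAtom ν ∈ chaseF ν Lex (Iex n) 1 := by
  refine Or.inr ⟨R1ex, by simp [Lex], fun _ => .const 0, ?_, _, rfl, ?_⟩
  · rintro _ ⟨_, rfl, rfl⟩
    exact Or.inl rfl
  · have : restrict (fun _ => Term.const 0) R1ex.frontier = fun _ => .const 0 := by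
      funext v; simp [restrict]
    simp [Atom.subst, Term.subst, safeSub, R1ex_exist, this, pAtom, zNull]

lemma rAtom_mem_chaseF_two {n i : ℕ} (hi : i < n) : rAtom ν i ∈ chaseF ν Lex (Iex n) 2 := by
  let π : ℕ → Term := fun v => if v = 3 then zNull ν else if v = 4 then .const (i + 1) else .const 0
  refine Or.inr ⟨R2ex, by simp [Lex], π, ?_, _, rfl, ?_⟩
  · rintro _ ⟨_, rfl | rfl, rfl⟩
    · have : Atom.subst π ⟨2, [.var 2, .var 3]⟩ = pAtom ν := by
        simp [Atom.subst, Term.subst, π, pAtom]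
      exact this ▸ pAtom_mem_chaseF_one ν n
    · refine chaseF_subset_chaseF_succ ν Lex _ 0 (Or.inr ⟨i, hi, ?_⟩)
      simp [Atom.subst, Term.subst, π]
  · simp [Atom.subst, Term.subst, safeSub, Rule.exist, varsOf, Atom.vars, R2ex, π, rAtom]

lemma occursInAtLeast_zNull (n : ℕ) :
    occursInAtLeast (chaseInf ν Lex (Iex n)) (zNull ν) (n + 1) := by
  refine ⟨insert (pAtom ν) (rAtom ν '' Set.Iio n), ?_, ((Set.finite_Iio n).image _).insert _, ?_⟩
  · rintro _ (rfl | ⟨i, hi, rfl⟩)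
    · exact ⟨chaseF_subset_chaseInf ν Lex _ 1 (pAtom_mem_chaseF_one ν n),
        by simp [pAtom, Atom.terms]⟩
    · exact ⟨chaseF_subset_chaseInf ν Lex _ 2 (rAtom_mem_chaseF_two ν hi),
        by simp [rAtom, Atom.terms]⟩
  · have hinj : Function.Injective (rAtom ν) := fun i j h => by simpa [rAtom] using h
    rw [Set.ncard_insert_of_notMem (by simp [rAtom, pAtom]) ((Set.finite_Iio n).image _),
      hinj.injOn.ncard_image, Set.ncard_Iio_nat]

lemma p_const_not_mem_chaseInf (n : ℕ) (s : Term) (c : ℕ) :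
    (⟨2, [s, .const c]⟩ : Atom) ∉ chaseInf ν Lex (Iex n) := by
  simp only [chaseInf, Set.mem_iUnion, not_exists]
  intro k
  induction k with
  | zero => rintro (h | ⟨i, -, h⟩) <;> simp_all
  | succ k ih =>
    rintro (h | ⟨R, hR, π, -, _, hh, h⟩)
    · exact ih h
    · simp only [Lex, List.mem_cons, List.not_mem_nil, or_false] at hR
      rcases hR with rfl | rfl
      · obtain rfl : _ = (⟨2, [.var 0, .var 1]⟩ : Atom) := hh
        simp [Atom.subst, Term.subst, safeSub, R1ex_exist] at h
      · obtain rfl : _ = (⟨3, [.var 3, .var 4]⟩ : Atom) := hh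
        simp [Atom.subst] at h

/-- A homomorphism that can be mapped back into the chase cannot send `z` to a constant, as
the chase has no `p`-atom with a constant second argument. -/
lemma exists_subst_zNull_eq_var {n : ℕ} {σ σ' : ℕ → Term} {J : Set Atom}
    (hσ : isHom σ (chaseInf ν Lex (Iex n)) J) (hσ' : isHom σ' J (chaseInf ν Lex (Iex n))) :
    ∃ m, (zNull ν).subst σ = .var m := by
  cases hz : (zNull ν).subst σ with
  | var m => exact ⟨m, rfl⟩
  | const c =>
    have hp : (pAtom ν).subst σ = ⟨2, [.const 0, .const c]⟩ := by
      simp only [pAtom, Atom.subst, List.map_cons, List.map_nil, hz]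
      rfl
    replace hp := hp ▸ hσ ⟨_, chaseF_subset_chaseInf ν Lex _ 1 (pAtom_mem_chaseF_one ν n), rfl⟩
    exact (p_const_not_mem_chaseInf ν n _ c (hσ' ⟨_, hp, rfl⟩)).elim

end PrimeExample

/-- the prime example is not parallelisable: for each `n`, the chase of `I_n`
contains a null occurring in `n+1` atoms. -/
theorem prime_example_not_parallelisable :
    (∀ ν, SONaming Lex ν → ∀ n : ℕ,
      ∃ t, t ∈ nullsOf (chaseInf ν Lex (Iex n)) ∧
        occursInAtLeast (chaseInf ν Lex (Iex n)) t (n + 1)) ∧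
    ¬ Parallelisable Lex := by
  refine ⟨fun ν _ n => ⟨zNull ν, ⟨?_, id⟩, occursInAtLeast_zNull ν n⟩, ?_⟩
  · exact mem_termsOf.2 ⟨pAtom ν, chaseF_subset_chaseInf ν Lex _ 1 (pAtom_mem_chaseF_one ν n),
      by simp [pAtom]⟩
  rintro ⟨L', hL', hpar⟩
  obtain ⟨ν, hν⟩ := exists_soNaming (L := Lex) fun R hR => Rule.frontier_finite <| by
    simp only [Lex, List.mem_cons, List.not_mem_nil, or_false] at hR
    rcases hR with rfl | rfl <;> exact Set.finite_singleton _
  obtain ⟨ν', hν'⟩ := exists_soNaming fun R hR => Rule.frontier_finite (hL' R hR).2.1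
  set M := (L'.map fun R => R.head.ncard).sum
  obtain ⟨⟨σ, hσ⟩, σ', hσ'⟩ := hpar ν ν' hν hν' (Iex M) (isInstance_Iex M)
  obtain ⟨m, hm⟩ := exists_subst_zNull_eq_var ν hσ.1 hσ'
  have hocc := (occursInAtLeast_zNull ν M).of_isInjHom hσ
  rw [hm] at hocc
  have := le_of_occursInAtLeast_chaseStep (fun R hR => (hL' R hR).2.1) hν'
    (isInstance_Iex M).2 hocc
  omega

end ER
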